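/- Let p > 3 be a prime, let w,x,y,z : ZMod p → {−1,1}, let a,b ∈ {τ,ι} be flags, and suppose H = 𝓗(W,X,Y,Z)^{a,b}_{1,1,1} is a Hadamard matrix (W = BC(w), etc.). Then H is Hadamard equivalent to 𝓗(W,Y,Z,X)^{b,ab}_{1,1,1} and to 𝓗(W,Z,X,Y)^{ab,a}_{1,1,1}, and also to 𝓗(−W,Y,X,Z)^{b,a}_{1,1,1} and to 𝓗(−W,Z,Y,X)^{ab,b}_{1,1,1}. -/

import Mathlib

open Matrix

/-- Entries of a matrix are all ±1. -/
def IsPM {m n : Type*} (A : Matrix m n ℤ) : Prop := ∀ i j, A i j = 1 ∨ A i j = -1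

/-- A Hadamard matrix: ±1 entries and `H·Hᵀ = n·I`. -/
def IsHadamard {n : Type*} [Fintype n] [DecidableEq n] (H : Matrix n n ℤ) : Prop :=
  IsPM H ∧ H * Hᵀ = (Fintype.card n : ℤ) • (1 : Matrix n n ℤ)

/-- A signed permutation matrix: exactly one nonzero entry (which is ±1) in each
row and each column. -/
def IsSignedPerm {n : Type*} [DecidableEq n] (P : Matrix n n ℤ) : Prop :=
  ∃ (σ : Equiv.Perm n) (ε : n → ℤ), (∀ i, ε i = 1 ∨ ε i = -1) ∧
    P = Matrix.of fun i j => if σ i = j then ε i else 0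

/-- Hadamard equivalence of ±1 matrices. -/
def HadEquiv {n : Type*} [Fintype n] [DecidableEq n] (A B : Matrix n n ℤ) : Prop :=
  ∃ P Q : Matrix n n ℤ, IsSignedPerm P ∧ IsSignedPerm Q ∧ A = P * B * Q

/-- The back-circulant matrix `BC(u)` with entries `u (i + j)`. -/
def BC {p : ℕ} (u : ZMod p → ℤ) : Matrix (ZMod p) (ZMod p) ℤ :=
  Matrix.of fun i j => u (i + j)

/-- The circulant matrix `C(u)` with entries `u (j - i)`. -/
def Cir {p : ℕ} (u : ZMod p → ℤ) : Matrix (ZMod p) (ZMod p) ℤ :=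
  Matrix.of fun i j => u (j - i)

/-- A flag `τ` or `ι`. -/
inductive Flg | tau | iota
  deriving DecidableEq

/-- Flg multiplication: `ττ = ιι = τ` and `τι = ιτ = ι`. -/
instance : Mul Flg :=
  ⟨fun a b => match a, b with
    | .tau, c => c
    | .iota, .tau => .iota
    | .iota, .iota => .tau⟩

/-- `BC(u)^c`: the flag `τ` gives the back-circulant matrix `BC(u)`, the flag `ι`
gives the circulant matrix `C(u)` with the same first row. -/
def flagM {p : ℕ} (c : Flg) (u : ZMod p → ℤ) : Matrix (ZMod p) (ZMod p) ℤ :=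
  match c with
  | .tau => BC u
  | .iota => Cir u

/-- The `4p × 4p` block matrix `𝓗(W,X,Y,Z)^{a,b}_{r,s,t}` with `W = BC w`, `X = BC x`,
`Y = BC y`, `Z = BC z` back-circulant `p × p` blocks. -/
def HBlock {p : ℕ} (w x y z : ZMod p → ℤ) (a b : Flg) (r s t : ℕ) :
    Matrix (Fin 4 × ZMod p) (Fin 4 × ZMod p) ℤ :=
  Matrix.of fun ik jl =>
    (!![BC w, flagM a x, flagM b y, flagM (a * b) z;
        BC x, ((-1 : ℤ) ^ r) • flagM a w, flagM b z, ((-1 : ℤ) ^ r) • flagM (a * b) y;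
        BC y, ((-1 : ℤ) ^ t) • flagM a z, ((-1 : ℤ) ^ s) • flagM b w,
          ((-1 : ℤ) ^ (s + t)) • flagM (a * b) x;
        BC z, ((-1 : ℤ) ^ (r + t)) • flagM a y, ((-1 : ℤ) ^ s) • flagM b x,
          ((-1 : ℤ) ^ (r + s + t)) • flagM (a * b) w] ik.1 jl.1) ik.2 jl.2

/-!
Each of the four matrices arises from `𝓗(W,X,Y,Z)^{a,b}_{1,1,1}` by one permutation applied to
both the block rows and the block columns, followed by sign changes of whole block rows and
columns. Two such moves generate them all: rotating `X → Y → Z` (block permutation `(1 3 2)`,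
flags `(a, b) ↦ (b, ab)`), and swapping `X, Y` while replacing `W` by `−W` (block permutation
`(1 2)`, block rows `1, 2, 3` and block column `0` negated). The four equivalences are the
rotation, the rotation twice, the swap, and the swap after the rotation.
-/

def signedPermMatrix {n : Type*} [DecidableEq n] (σ : Equiv.Perm n) (ε : n → ℤ) :
    Matrix n n ℤ :=
  Matrix.of fun i j => if σ i = j then ε i else 0

section SignedPerm

variable {n : Type*} [Fintype n] [DecidableEq n]

theorem signedPermMatrix_mul_apply (σ : Equiv.Perm n) (ε : n → ℤ) (M : Matrix n n ℤ) (i j : n) :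
    (signedPermMatrix σ ε * M) i j = ε i * M (σ i) j := by
  simp [signedPermMatrix, mul_apply, ite_mul]

theorem mul_signedPermMatrix_apply (σ : Equiv.Perm n) (ε : n → ℤ) (M : Matrix n n ℤ) (i j : n) :
    (M * signedPermMatrix σ ε) i j = M i (σ.symm j) * ε (σ.symm j) := by
  simp [signedPermMatrix, mul_apply, ← Equiv.eq_symm_apply]

theorem IsSignedPerm.mul {P Q : Matrix n n ℤ} (hP : IsSignedPerm P) (hQ : IsSignedPerm Q) :
    IsSignedPerm (P * Q) := by
  obtain ⟨σ, ε, hε, rfl⟩ := hP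
  obtain ⟨τ, δ, hδ, rfl⟩ := hQ
  refine ⟨σ.trans τ, fun i => ε i * δ (σ i), fun i => ?_, ?_⟩
  · rcases hε i with h | h <;> rcases hδ (σ i) with h' | h' <;> simp [h, h']
  · ext i j
    change (signedPermMatrix σ ε * signedPermMatrix τ δ) i j = _
    rw [signedPermMatrix_mul_apply]
    simp only [signedPermMatrix, of_apply, mul_ite, mul_zero]
    congr

theorem HadEquiv.trans {A B C : Matrix n n ℤ} (hAB : HadEquiv A B) (hBC : HadEquiv B C) :
    HadEquiv A C := by
  obtain ⟨P, Q, hP, hQ, rfl⟩ := hAB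
  obtain ⟨P', Q', hP', hQ', rfl⟩ := hBC
  exact ⟨P * P', Q' * Q, hP.mul hP', hQ'.mul hQ, by simp only [Matrix.mul_assoc]⟩

theorem hadEquiv_of_apply_eq {A B : Matrix n n ℤ} (σ τ : Equiv.Perm n) {ε δ : n → ℤ}
    (hε : ∀ i, ε i = 1 ∨ ε i = -1) (hδ : ∀ j, δ j = 1 ∨ δ j = -1)
    (h : ∀ i j, A i j = ε i * δ j * B (σ i) (τ j)) : HadEquiv A B := by
  refine ⟨signedPermMatrix σ ε, signedPermMatrix τ.symm (δ ∘ τ.symm),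
    ⟨σ, ε, hε, rfl⟩, ⟨τ.symm, δ ∘ τ.symm, fun j => hδ _, rfl⟩, ?_⟩
  ext i j
  simp only [h, mul_signedPermMatrix_apply, signedPermMatrix_mul_apply, Equiv.symm_symm,
    Function.comp_apply, Equiv.symm_apply_apply]
  ring

theorem hadEquiv_of_blockwise {ι : Type*} [Fintype ι] [DecidableEq ι]
    {A B : Matrix (ι × n) (ι × n) ℤ} (σ τ : Equiv.Perm ι) {ε δ : ι → ℤ}
    (hε : ∀ i, ε i = 1 ∨ ε i = -1) (hδ : ∀ j, δ j = 1 ∨ δ j = -1)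
    (h : ∀ i j k l, A (i, k) (j, l) = ε i * δ j * B (σ i, k) (τ j, l)) : HadEquiv A B :=
  hadEquiv_of_apply_eq (σ.prodCongr (Equiv.refl n)) (τ.prodCongr (Equiv.refl n))
    (fun ik => hε ik.1) (fun jl => hδ jl.1) fun ik jl => h ik.1 jl.1 ik.2 jl.2

end SignedPerm

namespace Flg

theorem mul_comm (a b : Flg) : a * b = b * a := by
  cases a <;> cases b <;> rfl

theorem mul_mul_cancel_left (a b : Flg) : a * (a * b) = b := by
  cases a <;> cases b <;> rfl

end Flg

theorem flagM_neg {p : ℕ} (c : Flg) (u : ZMod p → ℤ) : flagM c (-u) = -flagM c u := by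
  cases c <;> rfl

theorem BC_neg {p : ℕ} (u : ZMod p → ℤ) : BC (-u) = -BC u := rfl

section Symmetries

variable {p : ℕ} [NeZero p] (w x y z : ZMod p → ℤ) (a b : Flg)

theorem hadEquiv_HBlock_rotate :
    HadEquiv (HBlock w x y z a b 1 1 1) (HBlock w y z x b (a * b) 1 1 1) := by
  refine hadEquiv_of_blockwise ⟨![0, 3, 1, 2], ![0, 2, 3, 1], by decide, by decide⟩
    ⟨![0, 3, 1, 2], ![0, 2, 3, 1], by decide, by decide⟩ (ε := 1) (δ := 1)
    (fun _ => Or.inl rfl) (fun _ => Or.inl rfl) fun i j k l => ?_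
  fin_cases i <;> fin_cases j <;>
    simp only [HBlock, of_apply, Equiv.coe_fn_mk, Pi.one_apply, Fin.isValue, Fin.zero_eta, Fin.mk_one,
      Fin.reduceFinMk, cons_val, cons_val_zero, cons_val_one, Matrix.smul_apply, smul_eq_mul,
      Flg.mul_comm a b, Flg.mul_mul_cancel_left] <;> ring

theorem hadEquiv_HBlock_swap :
    HadEquiv (HBlock w x y z a b 1 1 1) (HBlock (-w) y x z b a 1 1 1) := by
  refine hadEquiv_of_blockwise ⟨![0, 2, 1, 3], ![0, 2, 1, 3], by decide, by decide⟩
    ⟨![0, 2, 1, 3], ![0, 2, 1, 3], by decide, by decide⟩ (ε := ![1, -1, -1, -1])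
    (δ := ![-1, 1, 1, 1]) (by decide) (by decide) fun i j k l => ?_
  fin_cases i <;> fin_cases j <;>
    simp only [HBlock, of_apply, Equiv.coe_fn_mk, Fin.isValue, Fin.zero_eta, Fin.mk_one,
      Fin.reduceFinMk, cons_val, cons_val_zero, cons_val_one, Matrix.smul_apply, smul_eq_mul,
      Matrix.neg_apply, Flg.mul_comm b a, flagM_neg, BC_neg] <;> ring

end Symmetries

theorem stmt7_general (p : ℕ) [NeZero p]
    (w x y z : ZMod p → ℤ)
    (a b : Flg) :
    HadEquiv (HBlock w x y z a b 1 1 1) (HBlock w y z x b (a * b) 1 1 1) ∧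
    HadEquiv (HBlock w x y z a b 1 1 1) (HBlock w z x y (a * b) a 1 1 1) ∧
    HadEquiv (HBlock w x y z a b 1 1 1) (HBlock (-w) y x z b a 1 1 1) ∧
    HadEquiv (HBlock w x y z a b 1 1 1) (HBlock (-w) z y x (a * b) b 1 1 1) := by
  have rotate := hadEquiv_HBlock_rotate w x y z a b
  have rotate_twice :
      HadEquiv (HBlock w x y z a b 1 1 1) (HBlock w z x y (a * b) a 1 1 1) := by
    simpa only [Flg.mul_comm a b, Flg.mul_mul_cancel_left] using
      rotate.trans (hadEquiv_HBlock_rotate w y z x b (a * b))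
  exact ⟨rotate, rotate_twice, hadEquiv_HBlock_swap w x y z a b,
    rotate.trans (hadEquiv_HBlock_swap w y z x b (a * b))⟩

/-- Proposition 4.4(b), first part: if `H = 𝓗(W,X,Y,Z)^{a,b}_{1,1,1}`
is a Hadamard matrix, then `H` is Hadamard equivalent to `𝓗(W,Y,Z,X)^{b,ab}_{1,1,1}`,
`𝓗(W,Z,X,Y)^{ab,a}_{1,1,1}`, `𝓗(−W,Y,X,Z)^{b,a}_{1,1,1}` and
`𝓗(−W,Z,Y,X)^{ab,b}_{1,1,1}`. -/
theorem stmt7 (p : ℕ) [NeZero p] (hp : p.Prime) (hp3 : 3 < p)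
    (w x y z : ZMod p → ℤ)
    (hw : ∀ i, w i = 1 ∨ w i = -1) (hx : ∀ i, x i = 1 ∨ x i = -1)
    (hy : ∀ i, y i = 1 ∨ y i = -1) (hz : ∀ i, z i = 1 ∨ z i = -1)
    (a b : Flg)
    (hHad : _root_.IsHadamard (HBlock w x y z a b 1 1 1)) :
    HadEquiv (HBlock w x y z a b 1 1 1) (HBlock w y z x b (a * b) 1 1 1) ∧
    HadEquiv (HBlock w x y z a b 1 1 1) (HBlock w z x y (a * b) a 1 1 1) ∧
    HadEquiv (HBlock w x y z a b 1 1 1) (HBlock (-w) y x z b a 1 1 1) ∧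
    HadEquiv (HBlock w x y z a b 1 1 1) (HBlock (-w) z y x (a * b) b 1 1 1) :=
  stmt7_general p w x y z a b
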